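/- arXiv:2302.13093 — 3 statements merged into one kernel-verified Lean document; each statement's English description precedes it below -/
import Mathlib

section
/- For any ε with 0 < ε < 1/3 and any x > 0, erfc(x) ≥ exp(-(1+ε)*x^2 + log ε), i.e., erfc(x) ≥ ε * exp(-(1+ε)*x^2). -/
/-!
Since `exp (ε t²) ≥ 1 + ε t² ≥ 2 √ε t`, the Gaussian dominates `2 √ε t · exp (-(1 + ε) t²)`, whose
tail integral over `(x, ∞)` is explicit: `√ε / (1 + ε) · exp (-(1 + ε) x²)`. Hence
`erfc x ≥ 2 √ε / (√π (1 + ε)) · exp (-(1 + ε) x²)`, and the constant is at least `ε` as soon as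
`π ε (1 + ε)² ≤ 4`, which holds for `ε < 1/3`.
-/

noncomputable def erfc (x : ℝ) : ℝ :=
  (2 / Real.sqrt Real.pi) * ∫ t in Set.Ioi x, Real.exp (-t ^ 2)

open Real Set Filter MeasureTheory Topology

theorem integral_Ioi_mul_exp_neg_mul_sq {b : ℝ} (hb : 0 < b) (x : ℝ) :
    ∫ t in Ioi x, t * exp (-b * t ^ 2) = exp (-b * x ^ 2) / (2 * b) := by
  have hderiv : ∀ t ∈ Ici x,
      HasDerivAt (fun t ↦ -exp (-b * t ^ 2) / (2 * b)) (t * exp (-b * t ^ 2)) t := by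
    intro t _
    have h := ((hasDerivAt_pow 2 t).const_mul (-b)).exp.neg.div_const (2 * b)
    refine h.congr_deriv ?_
    field_simp
    ring
  have htendsto : Tendsto (fun t ↦ -exp (-b * t ^ 2) / (2 * b)) atTop (𝓝 0) := by
    have hexp : Tendsto (fun t : ℝ ↦ exp (-b * t ^ 2)) atTop (𝓝 0) :=
      tendsto_exp_atBot.comp <|
        (tendsto_pow_atTop two_ne_zero).const_mul_atTop_of_neg (neg_neg_of_pos hb)
    simpa using hexp.neg.div_const (2 * b)
  rw [integral_Ioi_of_hasDerivAt_of_tendsto' hderiv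
    (integrable_mul_exp_neg_mul_sq hb).integrableOn htendsto]
  ring

theorem two_mul_sqrt_mul_le_exp_mul_sq {ε : ℝ} (hε : 0 ≤ ε) (t : ℝ) :
    2 * √ε * t ≤ exp (ε * t ^ 2) := by
  have hsq : √ε ^ 2 = ε := sq_sqrt hε
  nlinarith [add_one_le_exp (ε * t ^ 2), sq_nonneg (√ε * t - 1)]

theorem sqrt_div_one_add_mul_exp_le_integral_Ioi_exp_neg_sq {ε : ℝ} (hε : 0 ≤ ε) (x : ℝ) :
    √ε / (1 + ε) * exp (-(1 + ε) * x ^ 2) ≤ ∫ t in Ioi x, exp (-t ^ 2) := by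
  have hb : 0 < 1 + ε := by linarith
  have hpointwise : ∀ t ∈ Ioi x,
      2 * √ε * (t * exp (-(1 + ε) * t ^ 2)) ≤ exp (-t ^ 2) := by
    intro t _
    have hsplit : exp (-t ^ 2) = exp (ε * t ^ 2) * exp (-(1 + ε) * t ^ 2) := by
      rw [← exp_add]; ring_nf
    rw [hsplit, ← mul_assoc]
    exact mul_le_mul_of_nonneg_right (two_mul_sqrt_mul_le_exp_mul_sq hε t) (exp_pos _).le
  have hmono := setIntegral_mono_on ((integrable_mul_exp_neg_mul_sq hb).integrableOn.const_mul _)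
    (integrable_exp_neg_mul_sq one_pos).integrableOn measurableSet_Ioi
    (by simpa using hpointwise)
  rw [integral_const_mul, integral_Ioi_mul_exp_neg_mul_sq hb] at hmono
  calc √ε / (1 + ε) * exp (-(1 + ε) * x ^ 2)
      = 2 * √ε * (exp (-(1 + ε) * x ^ 2) / (2 * (1 + ε))) := by field_simp
    _ ≤ ∫ t in Ioi x, exp (-t ^ 2) := by simpa using hmono

theorem mul_sqrt_pi_mul_one_add_le_two_mul_sqrt {ε : ℝ} (hε0 : 0 ≤ ε) (hε1 : ε < 1 / 3) :
    ε * (√π * (1 + ε)) ≤ 2 * √ε := by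
  have hsqrt_ε : √ε ^ 2 = ε := sq_sqrt hε0
  have hsqrt_π : √π ^ 2 = π := sq_sqrt pi_pos.le
  have hfactor : √π * √ε * (1 + ε) ≤ 2 := by
    have hsq : (√π * √ε * (1 + ε)) ^ 2 ≤ 2 ^ 2 := by
      have hcubic : ε * (1 + ε) ^ 2 ≤ 16 / 27 := by nlinarith
      rw [mul_pow, mul_pow, hsqrt_π, hsqrt_ε, mul_assoc]
      nlinarith [pi_lt_d2]
    exact (pow_le_pow_iff_left₀ (by positivity) zero_le_two two_ne_zero).mp hsq
  calc ε * (√π * (1 + ε))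
      = √ε * (√π * √ε * (1 + ε)) := by linear_combination -(√π * (1 + ε)) * hsqrt_ε
    _ ≤ √ε * 2 := mul_le_mul_of_nonneg_left hfactor (sqrt_nonneg ε)
    _ = 2 * √ε := mul_comm _ _

theorem erfc_ge_general (ε : ℝ) (hε0 : 0 < ε) (hε1 : ε < 1 / 3) (x : ℝ) :
    erfc x ≥ ε * Real.exp (-(1 + ε) * x ^ 2) := by
  have hconst : ε ≤ 2 / √π * (√ε / (1 + ε)) := by
    rw [div_mul_div_comm, le_div_iff₀ (by positivity)]
    exact mul_sqrt_pi_mul_one_add_le_two_mul_sqrt hε0.le hε1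
  calc ε * exp (-(1 + ε) * x ^ 2)
      ≤ 2 / √π * (√ε / (1 + ε)) * exp (-(1 + ε) * x ^ 2) :=
        mul_le_mul_of_nonneg_right hconst (exp_pos _).le
    _ ≤ erfc x := by
        rw [mul_assoc, erfc]
        gcongr
        exact sqrt_div_one_add_mul_exp_le_integral_Ioi_exp_neg_sq hε0.le x

theorem erfc_ge (ε : ℝ) (hε0 : 0 < ε) (hε1 : ε < 1 / 3) (x : ℝ) (hx : 0 < x) :
    erfc x ≥ ε * Real.exp (-(1 + ε) * x ^ 2) :=
  erfc_ge_general ε hε0 hε1 x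
end

section
/- If X follows a chi-squared distribution with d degrees of freedom, then for every t > 0, P[X ≥ d + 2 sqrt(d t) + 2 t] ≤ exp(−t). In particular, with t = log M, P[X ≥ d + 2 sqrt(d log M) + 2 log M] ≤ 1/M. -/
/-!
Chernoff: for `0 ≤ l < 1/2` a standard Gaussian has `E exp (l Z²) = (1 - 2l)^(-1/2)`, so
`P[X ≥ a] ≤ exp (-l a - (d/2) log (1 - 2l))`. With `r = √d`, `s = √t`, `a = (r + s)² + s²` and
`l = s / (2s + r)`, the exponent is at most `-t` precisely because `log x ≤ (x - x⁻¹) / 2` for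
`x = 1 + 2s/r ≥ 1`, which is `y ≤ sinh y` for `y = log x ≥ 0`.
-/

open MeasureTheory ProbabilityTheory Real

theorem Real.log_le_half_sub_inv {x : ℝ} (hx : 1 ≤ x) : log x ≤ (x - x⁻¹) / 2 := by
  rw [← sinh_log (by linarith)]
  exact self_le_sinh_iff.2 (log_nonneg hx)

theorem mgf_sq_gaussianReal {l : ℝ} (hl : l < 1 / 2) :
    mgf (fun x ↦ x ^ 2) (gaussianReal 0 1) l = (√(1 - 2 * l))⁻¹ := by
  have hc : 0 < 1 - 2 * l := by linarith
  have hpdf : ∀ x, gaussianPDFReal 0 1 x • rexp (l * x ^ 2)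
      = (√(2 * π))⁻¹ * rexp (-((1 - 2 * l) / 2) * x ^ 2) := fun x ↦ by
    rw [gaussianPDFReal, smul_eq_mul, mul_assoc, ← exp_add]
    congr 2 <;> simp; ring
  rw [mgf, integral_gaussianReal_eq_integral_smul one_ne_zero]
  simp only [hpdf]
  rw [integral_const_mul, integral_gaussian, div_div_eq_mul_div, mul_comm π, sqrt_div' _ hc.le,
    sqrt_mul' _ pi_pos.le]
  field_simp

theorem mgf_sum_comp_pi {ι E : Type*} [Fintype ι] [MeasurableSpace E] (μ : Measure E)
    [SigmaFinite μ] (f : E → ℝ) (l : ℝ) :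
    mgf (fun z : ι → E ↦ ∑ i, f (z i)) (Measure.pi fun _ ↦ μ) l
      = mgf f μ l ^ Fintype.card ι := by
  simp only [mgf, Finset.mul_sum, exp_sum]
  exact integral_fintype_prod_eq_pow (fun x ↦ rexp (l * f x))

theorem mgf_sum_sq_gaussianReal_pi {ι : Type*} [Fintype ι] {l : ℝ} (hl : l < 1 / 2) :
    mgf (fun z : ι → ℝ ↦ ∑ i, z i ^ 2) (Measure.pi fun _ ↦ gaussianReal 0 1) l
      = (√(1 - 2 * l))⁻¹ ^ Fintype.card ι := by
  rw [mgf_sum_comp_pi _ (fun x ↦ x ^ 2), mgf_sq_gaussianReal hl]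

theorem measureReal_sum_sq_ge_le {ι : Type*} [Fintype ι] (a : ℝ) {l : ℝ} (hl₀ : 0 ≤ l)
    (hl : l < 1 / 2) :
    (Measure.pi fun _ : ι ↦ gaussianReal 0 1).real {z | a ≤ ∑ i, z i ^ 2}
      ≤ rexp (-l * a - Fintype.card ι / 2 * log (1 - 2 * l)) := by
  have hc : 0 < 1 - 2 * l := by linarith
  have hmgf := mgf_sum_sq_gaussianReal_pi (ι := ι) hl
  have hint : Integrable (fun z ↦ rexp (l * ∑ i, z i ^ 2)) (Measure.pi fun _ ↦ gaussianReal 0 1) :=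
    mgf_pos_iff.1 (by rw [hmgf]; positivity)
  calc _ ≤ rexp (-l * a) * (√(1 - 2 * l))⁻¹ ^ Fintype.card ι :=
        hmgf ▸ measure_ge_le_exp_mul_mgf a hl₀ hint
    _ = _ := by
      rw [← exp_log (sqrt_pos.2 hc), ← exp_neg, ← exp_nat_mul, ← exp_add, log_sqrt hc.le]
      ring_nf

theorem chiSq_chernoff_exponent_le {r s : ℝ} (hr : 0 < r) (hs : 0 < s) :
    -(s / (2 * s + r)) * (r ^ 2 + 2 * r * s + 2 * s ^ 2)
      - r ^ 2 / 2 * log (1 - 2 * (s / (2 * s + r))) ≤ -s ^ 2 := by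
  have hx : 1 ≤ (2 * s + r) / r := by rw [le_div_iff₀ hr]; linarith
  have hc : 1 - 2 * (s / (2 * s + r)) = ((2 * s + r) / r)⁻¹ := by field_simp; ring
  have hlog := mul_le_mul_of_nonneg_left (log_le_half_sub_inv hx) (by positivity : 0 ≤ r ^ 2 / 2)
  have hexp : -(s / (2 * s + r)) * (r ^ 2 + 2 * r * s + 2 * s ^ 2)
      + r ^ 2 / 2 * (((2 * s + r) / r - ((2 * s + r) / r)⁻¹) / 2) = -s ^ 2 := by
    field_simp; ring
  rw [hc, log_inv]
  linarith

theorem measure_sum_sq_ge_le_exp_neg {ι : Type*} [Fintype ι] {t : ℝ} (ht : 0 < t) :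
    (Measure.pi fun _ : ι ↦ gaussianReal 0 1)
        {z | ∑ i, z i ^ 2 ≥ Fintype.card ι + 2 * √(Fintype.card ι * t) + 2 * t}
      ≤ ENNReal.ofReal (rexp (-t)) := by
  set n := Fintype.card ι
  rcases n.eq_zero_or_pos with hn | hn
  · have : IsEmpty ι := Fintype.card_eq_zero_iff.1 hn
    convert (zero_le : (0 : ENNReal) ≤ _)
    simp [hn, show ¬ 2 * t ≤ 0 by linarith]
  have hr : 0 < √n := sqrt_pos.2 (by exact_mod_cast hn)
  have hs : 0 < √t := sqrt_pos.2 ht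
  have hl : √t / (2 * √t + √n) < 1 / 2 := by
    rw [div_lt_div_iff₀ (by positivity) two_pos]; linarith
  rw [ENNReal.le_ofReal_iff_toReal_le (measure_ne_top _ _) (exp_pos _).le, ← measureReal_def]
  calc _ ≤ _ := measureReal_sum_sq_ge_le (ι := ι) _ (by positivity) hl
    _ ≤ rexp (-t) := by
      have := chiSq_chernoff_exponent_le hr hs
      rw [sq_sqrt (Nat.cast_nonneg n), sq_sqrt ht.le] at this
      rwa [exp_le_exp, sqrt_mul (Nat.cast_nonneg n), ← mul_assoc]

theorem chiSq_tail_bound (d : ℕ) (t : ℝ) (ht : 0 < t) :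
    (Measure.pi fun _ : Fin d => gaussianReal 0 1)
        {z : Fin d → ℝ | ∑ i, (z i) ^ 2 ≥ d + 2 * Real.sqrt (d * t) + 2 * t} ≤
      ENNReal.ofReal (Real.exp (-t)) ∧
    ∀ Mr : ℝ, 1 < Mr →
      (Measure.pi fun _ : Fin d => gaussianReal 0 1)
          {z : Fin d → ℝ |
            ∑ i, (z i) ^ 2 ≥ d + 2 * Real.sqrt (d * Real.log Mr) + 2 * Real.log Mr} ≤
        ENNReal.ofReal (1 / Mr) := by
  refine ⟨by simpa using measure_sum_sq_ge_le_exp_neg (ι := Fin d) ht, fun M hM ↦ ?_⟩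
  have := measure_sum_sq_ge_le_exp_neg (ι := Fin d) (log_pos hM)
  rwa [exp_neg, exp_log (by linarith), Fintype.card_fin, ← one_div] at this
end

section
/- For Q̂ > 0, χ̂ > 0 and Λ = (Mλ)² > 0, the Gaussian expectation of the minimum value satisfies: E_z[ min_x ( (Q̂/2)x² − sqrt(χ̂) z x + Mλ|x| ) ] = −(1/(2Q̂)) [ (Λ + χ̂) erfc( sqrt(Λ/(2χ̂)) ) − sqrt(2Λχ̂/π) exp(−Λ/(2χ̂)) ], where z is standard Gaussian. -/
open MeasureTheory ProbabilityTheory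

/-!
Completing the square shows that `⨅ x, Q/2 x² - c x + b |x|` equals `-max (|c| - b) 0 ² / (2Q)`,
attained at the soft-thresholding point. With `c = √χ z`, `b = √Λ` the integrand is an even
function of `z` vanishing for `|z| ≤ √Λ / √χ`, so the expectation is twice a Gaussian tail integral
of `(√χ z - √Λ)²`. For the standard normal density `φ` this is computed from the truncated moments
`∫_c^∞ z φ = φ(c)` and `∫_c^∞ z² φ = c φ(c) + ∫_c^∞ φ` (integration by parts), and
`∫_c^∞ φ = erfc (c / √2) / 2`.
-/

open Set Filter Topology Real

theorem iInf_half_mul_sq_sub_mul_add_mul_abs (Q c b : ℝ) (hQ : 0 < Q) :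
    ⨅ x : ℝ, Q / 2 * x ^ 2 - c * x + b * |x| = -max (|c| - b) 0 ^ 2 / (2 * Q) := by
  set m := max (|c| - b) 0
  have hm : 0 ≤ m := le_max_right _ _
  have hcm : |c| - b ≤ m := le_max_left _ _
  have hmm : (|c| - b) * m = m ^ 2 := by
    rcases max_cases (|c| - b) 0 with ⟨h, -⟩ | ⟨h, -⟩ <;> simp only [m, h] <;> ring
  refine IsGLB.ciInf_eq (IsLeast.isGLB ⟨?_, ?_⟩)
  · -- the minimiser is the soft-thresholding point `sign c * m / Q`
    obtain ⟨s, hs, hcs⟩ : ∃ s : ℝ, |s| = 1 ∧ c * s = |c| := by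
      rcases le_or_gt 0 c with h | h
      · exact ⟨1, abs_one, by rw [abs_of_nonneg h, mul_one]⟩
      · exact ⟨-1, by simp, by rw [abs_of_neg h, mul_neg_one]⟩
    refine ⟨s * m / Q, ?_⟩
    have hsq : s ^ 2 = 1 := by rw [← sq_abs, hs, one_pow]
    beta_reduce
    rw [abs_div, abs_mul, hs, abs_of_nonneg hm, abs_of_pos hQ]
    field_simp
    linear_combination m ^ 2 * hsq - 2 * m * hcs - 2 * hmm
  · rintro _ ⟨x, rfl⟩
    have hcx : c * x ≤ |c| * |x| := by rw [← abs_mul]; exact le_abs_self _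
    have hmx : (|c| - b) * |x| ≤ m * |x| := mul_le_mul_of_nonneg_right hcm (abs_nonneg x)
    show _ ≤ Q / 2 * x ^ 2 - c * x + b * |x|
    rw [div_le_iff₀ (by positivity), ← sq_abs x]
    nlinarith [sq_nonneg (Q * |x| - m), mul_le_mul_of_nonneg_left hcx hQ.le,
      mul_le_mul_of_nonneg_left hmx hQ.le]

theorem tendsto_pow_mul_exp_neg_sq_div_two_atTop (n : ℕ) :
    Tendsto (fun z : ℝ => z ^ n * exp (-z ^ 2 / 2)) atTop (𝓝 0) := by
  have h := (rpow_mul_exp_neg_mul_sq_isLittleO_exp_neg one_half_pos n).trans_tendsto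
    ((tendsto_exp_atBot.comp (tendsto_id.const_mul_atTop_of_neg (by norm_num))))
  refine h.congr' (eventually_of_mem (Ioi_mem_atTop 0) fun z _ => ?_)
  simp only [rpow_natCast]
  ring_nf

theorem integrable_pow_mul_exp_neg_sq_div_two (n : ℕ) :
    Integrable fun z : ℝ => z ^ n * exp (-z ^ 2 / 2) := by
  have h := integrable_rpow_mul_exp_neg_mul_sq one_half_pos
    (by linarith [n.cast_nonneg (α := ℝ)] : (-1 : ℝ) < n)
  refine h.congr (ae_of_all _ fun z => ?_)
  simp only [rpow_natCast]
  ring_nf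

theorem hasDerivAt_exp_neg_sq_div_two (x : ℝ) :
    HasDerivAt (fun z : ℝ => exp (-z ^ 2 / 2)) (-x * exp (-x ^ 2 / 2)) x :=
  ((hasDerivAt_pow 2 x).fun_neg.div_const 2).exp.congr_deriv (by ring)

theorem integral_Ioi_mul_exp_neg_sq_div_two (c : ℝ) :
    ∫ z in Ioi c, z * exp (-z ^ 2 / 2) = exp (-c ^ 2 / 2) := by
  have h := integral_Ioi_of_hasDerivAt_of_tendsto' (a := c) (m := 0)
    (fun x _ => (hasDerivAt_exp_neg_sq_div_two x).fun_neg)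
    (by simpa using (integrable_pow_mul_exp_neg_sq_div_two 1).integrableOn)
    (by simpa using (tendsto_pow_mul_exp_neg_sq_div_two_atTop 0).neg)
  simpa using h

theorem integral_Ioi_sq_mul_exp_neg_sq_div_two (c : ℝ) :
    ∫ z in Ioi c, z ^ 2 * exp (-z ^ 2 / 2) =
      c * exp (-c ^ 2 / 2) + ∫ z in Ioi c, exp (-z ^ 2 / 2) := by
  have hderiv (x : ℝ) : HasDerivAt (fun z : ℝ => -(z * exp (-z ^ 2 / 2)))
      (x ^ 2 * exp (-x ^ 2 / 2) - exp (-x ^ 2 / 2)) x :=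
    ((hasDerivAt_id x).mul (hasDerivAt_exp_neg_sq_div_two x)).fun_neg.congr_deriv (by simp; ring)
  have hint0 := (integrable_pow_mul_exp_neg_sq_div_two 0).integrableOn (s := Ioi c)
  have hint2 := (integrable_pow_mul_exp_neg_sq_div_two 2).integrableOn (s := Ioi c)
  simp only [pow_zero, one_mul] at hint0
  have h := integral_Ioi_of_hasDerivAt_of_tendsto' (a := c) (m := 0) (fun x _ => hderiv x)
    (hint2.sub hint0) (by simpa using (tendsto_pow_mul_exp_neg_sq_div_two_atTop 1).neg)
  rw [integral_sub hint2 hint0] at h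
  linarith

theorem integral_Ioi_exp_neg_sq_div_two (c : ℝ) :
    ∫ z in Ioi c, exp (-z ^ 2 / 2) = √(π / 2) * erfc (c / √2) := by
  have hsub := integral_comp_mul_right_Ioi (fun t => exp (-t ^ 2)) c
    (inv_pos.2 (by positivity : (0 : ℝ) < √2))
  have hsq (x : ℝ) : -(x / √2) ^ 2 = -x ^ 2 / 2 := by
    rw [div_pow, sq_sqrt zero_le_two, neg_div]
  simp only [smul_eq_mul, inv_inv, ← div_eq_mul_inv] at hsub
  simp only [hsq] at hsub
  rw [hsub, erfc, sqrt_div' π zero_le_two]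
  field_simp
  rw [sq_sqrt zero_le_two, mul_comm]

theorem integral_Ioi_div_sub_sq_mul_exp_neg_sq_div_two (a b : ℝ) (ha : a ≠ 0) :
    ∫ z in Ioi (b / a), (a * z - b) ^ 2 * exp (-z ^ 2 / 2) =
      (a ^ 2 + b ^ 2) * √(π / 2) * erfc (b / a / √2) - a * b * exp (-(b / a) ^ 2 / 2) := by
  have hint (n : ℕ) := (integrable_pow_mul_exp_neg_sq_div_two n).integrableOn (s := Ioi (b / a))
  have hint0 : IntegrableOn (fun z : ℝ => exp (-z ^ 2 / 2)) (Ioi (b / a)) := by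
    simpa using hint 0
  have hint1 : IntegrableOn (fun z : ℝ => z * exp (-z ^ 2 / 2)) (Ioi (b / a)) := by
    simpa using hint 1
  have hexpand : (fun z : ℝ => (a * z - b) ^ 2 * exp (-z ^ 2 / 2)) = fun z =>
      a ^ 2 * (z ^ 2 * exp (-z ^ 2 / 2)) - 2 * a * b * (z * exp (-z ^ 2 / 2)) +
        b ^ 2 * exp (-z ^ 2 / 2) := by
    ext z; ring
  rw [hexpand, integral_add ?int (hint0.const_mul _),
    integral_sub ((hint 2).const_mul _) (hint1.const_mul _), integral_const_mul,
    integral_const_mul, integral_const_mul,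
    integral_Ioi_sq_mul_exp_neg_sq_div_two, integral_Ioi_mul_exp_neg_sq_div_two,
    integral_Ioi_exp_neg_sq_div_two]
  · field_simp
    ring
  case int => exact ((hint 2).const_mul _).sub (hint1.const_mul _)

theorem integral_gaussianReal_max_mul_abs_sub_sq {a b : ℝ} (ha : 0 < a) (hb : 0 ≤ b) :
    ∫ z, max (a * |z| - b) 0 ^ 2 ∂gaussianReal 0 1 =
      (a ^ 2 + b ^ 2) * erfc (b / a / √2) - √(2 / π) * a * b * exp (-(b / a) ^ 2 / 2) := by
  set F : ℝ → ℝ := (Ioi (b / a)).indicator fun t => (a * t - b) ^ 2 * exp (-t ^ 2 / 2)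
  have hF (t : ℝ) : max (a * t - b) 0 ^ 2 * exp (-t ^ 2 / 2) = F t := by
    by_cases ht : b / a < t
    · have hbt : b ≤ a * t := ((div_lt_iff₀' ha).1 ht).le
      simp [F, ht, hbt]
    · have hbt : a * t ≤ b := (le_div_iff₀' ha).1 (not_lt.1 ht)
      simp [F, ht, hbt]
  have hdensity (z : ℝ) :
      gaussianPDFReal 0 1 z • max (a * |z| - b) 0 ^ 2 = (√(2 * π))⁻¹ * F |z| := by
    rw [← hF, sq_abs, gaussianPDFReal, smul_eq_mul]
    simp only [NNReal.coe_one, mul_one, sub_zero]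
    ring
  rw [integral_gaussianReal_eq_integral_smul one_ne_zero]
  simp only [hdensity]
  rw [integral_const_mul, integral_comp_abs, setIntegral_indicator measurableSet_Ioi,
    Ioi_inter_Ioi, max_eq_right (div_nonneg hb ha.le),
    integral_Ioi_div_sub_sq_mul_exp_neg_sq_div_two a b ha.ne', sqrt_mul zero_le_two,
    sqrt_div' π zero_le_two, sqrt_div' 2 pi_pos.le]
  field_simp
  rw [sq_sqrt zero_le_two]

theorem gaussian_min_value (Qh χh Λ : ℝ) (hQ : 0 < Qh) (hχ : 0 < χh) (hΛ : 0 < Λ) :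
    (∫ z : ℝ, (⨅ x : ℝ, Qh / 2 * x ^ 2 - Real.sqrt χh * z * x + Real.sqrt Λ * |x|)
        ∂(gaussianReal 0 1)) =
      -(1 / (2 * Qh)) *
        ((Λ + χh) * erfc (Real.sqrt (Λ / (2 * χh))) -
          Real.sqrt (2 * Λ * χh / Real.pi) * Real.exp (-Λ / (2 * χh))) := by
  have ha : 0 < √χh := sqrt_pos.2 hχ
  have hinf (z : ℝ) : ⨅ x : ℝ, Qh / 2 * x ^ 2 - √χh * z * x + √Λ * |x| =
      -(1 / (2 * Qh)) * max (√χh * |z| - √Λ) 0 ^ 2 := by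
    rw [iInf_half_mul_sq_sub_mul_add_mul_abs _ _ _ hQ, abs_mul, abs_of_pos ha]
    ring
  have harg : √Λ / √χh / √2 = √(Λ / (2 * χh)) := by
    rw [sqrt_div' Λ (by positivity), sqrt_mul zero_le_two, div_div, mul_comm]
  have hexp : -(√Λ / √χh) ^ 2 / 2 = -Λ / (2 * χh) := by
    rw [div_pow, sq_sqrt hΛ.le, sq_sqrt hχ.le]
    ring
  have hcoef : √(2 / π) * √χh * √Λ = √(2 * Λ * χh / π) := by
    rw [← sqrt_mul (by positivity), ← sqrt_mul (by positivity)]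
    ring_nf
  simp only [hinf]
  rw [integral_const_mul, integral_gaussianReal_max_mul_abs_sub_sq ha (sqrt_nonneg Λ), harg, hexp,
    hcoef, sq_sqrt hχ.le, sq_sqrt hΛ.le, add_comm χh]
end
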